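/- There exists B > 0 such that for every b > B, the b-orbit h_b is strictly increasing on (0,∞) and lim_{x→∞} h_b(x) = ∞. -/

import Mathlib

open Real Set Filter Topology

/-- A global `C²` solution of equation (14), `h'' - coth(x) h' + sin(2h) = 0` on `(0,∞)`. -/
def SolvesEq14 (h : ℝ → ℝ) : Prop :=
  ContDiffOn ℝ 2 h (Set.Ioi 0) ∧
  ∀ x ∈ Set.Ioi (0:ℝ),
    deriv (deriv h) x - (Real.cosh x / Real.sinh x) * deriv h x + Real.sin (2 * h x) = 0

/-- The `b`-orbit: a global solution of equation (14) with `h(x)/x² → b` as `x → 0⁺`. -/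
def IsBOrbit (b : ℝ) (h : ℝ → ℝ) : Prop :=
  SolvesEq14 h ∧ Filter.Tendsto (fun x => h x / x ^ 2) (𝓝[>] (0:ℝ)) (𝓝 b)

/-!
Write `g = h' / sinh`, so that equation (14) reads `g' = -sin (2h) / sinh`. Since `h(x) ~ b x²`,
`g'` is bounded near `0`, so `g(0⁺)` exists, and L'Hôpital's rule identifies it as `2b`.
While `|g| ≤ 3b`, we get `|h(x)| ≤ 3b x sinh x`, hence `|g'| ≤ 2|h| / sinh ≤ 6b x` and
`|g - 2b| ≤ 6b x² < b` on `(0, 2/5]`; by a continuity argument this holds on all of `(0, 2/5]`,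
so `h' > b sinh > 0` there. The energy `h'²/2 + sin² h` is nondecreasing, its derivative being
`coth · h'²`; for `b > 5` it exceeds `3/2` at `2/5`, so from there on `h'² > 1`, hence `h' > 1`,
and `h` increases to `∞`.
-/

theorem abs_sub_le_mul_of_tendsto_nhdsGT {f f' : ℝ → ℝ} {a x C L : ℝ} (hax : a < x)
    (hf : ∀ t ∈ Ioc a x, HasDerivAt f (f' t) t) (hf' : ∀ t ∈ Ioo a x, |f' t| ≤ C)
    (hL : Tendsto f (𝓝[>] a) (𝓝 L)) : |f x - L| ≤ C * (x - a) := by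
  have hC : 0 ≤ C := (abs_nonneg _).trans (hf' ((a + x) / 2) ⟨by linarith, by linarith⟩)
  have hnear : ∀ s ∈ Ioc a x, |f x - f s| ≤ C * (x - a) := fun s hs => by
    have hmvt := norm_image_sub_le_of_norm_deriv_le_segment'
      (fun t ht => (hf t ⟨hs.1.trans_le ht.1, ht.2⟩).hasDerivWithinAt)
      (fun t ht => hf' t ⟨hs.1.trans_le ht.1, ht.2⟩) x ⟨hs.2, le_rfl⟩
    rw [Real.norm_eq_abs] at hmvt
    nlinarith [hs.1]
  refine le_of_tendsto ((tendsto_const_nhds.sub hL).abs) ?_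
  filter_upwards [Ioc_mem_nhdsGT hax] with s hs using hnear s hs

theorem forall_mem_Ioc_of_bootstrap {f : ℝ → ℝ} {a b : ℝ} {U : Set ℝ} (hU : IsOpen U)
    (hf : ContinuousOn f (Ioc a b)) (hstart : ∀ᶠ t in 𝓝[>] a, f t ∈ U)
    (hstep : ∀ x ∈ Ioc a b, (∀ t ∈ Ioo a x, f t ∈ U) → f x ∈ U) :
    ∀ x ∈ Ioc a b, f x ∈ U := by
  by_contra! ⟨x, hx, hxU⟩
  obtain ⟨δ, hδ, hδU⟩ := mem_nhdsGT_iff_exists_Ioc_subset.1 hstart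
  have hδx : δ < x := not_le.1 fun hxδ => hxU (hδU ⟨hx.1, hxδ⟩)
  set A := Icc δ b ∩ f ⁻¹' Uᶜ
  have hA : IsClosed A := (hf.mono fun t ht => ⟨hδ.trans_le ht.1, ht.2⟩)
    |>.preimage_isClosed_of_isClosed isClosed_Icc hU.isClosed_compl
  have hAbdd : BddBelow A := bddBelow_Icc.mono inter_subset_left
  have hmA : sInf A ∈ A := hA.csInf_mem ⟨x, ⟨hδx.le, hx.2⟩, hxU⟩ hAbdd
  refine hmA.2 (hstep _ ⟨hδ.trans_le hmA.1.1, hmA.1.2⟩ fun t ht => ?_)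
  by_contra htU
  rcases le_or_gt t δ with htδ | hδt
  · exact htU (hδU ⟨ht.1, htδ⟩)
  · exact (csInf_le hAbdd ⟨⟨hδt.le, ht.2.le.trans hmA.1.2⟩, htU⟩).not_gt ht.2

theorem LipschitzOnWith.exists_tendsto_nhdsGT {f : ℝ → ℝ} {K : NNReal} {a δ : ℝ} (haδ : a < δ)
    (hf : LipschitzOnWith K f (Ioo a δ)) : ∃ L, Tendsto f (𝓝[>] a) (𝓝 L) := by
  obtain ⟨F, hF, hfF⟩ := hf.extend_real
  refine ⟨F a, (hF.continuous.continuousWithinAt).congr' ?_⟩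
  filter_upwards [Ioo_mem_nhdsGT haδ] with t ht using (hfF ht).symm

theorem tendsto_atTop_of_le_deriv {f : ℝ → ℝ} {a c : ℝ} (hc : 0 < c)
    (hf : ∀ x ∈ Ici a, DifferentiableAt ℝ f x) (hf' : ∀ x ∈ Ici a, c ≤ deriv f x) :
    Tendsto f atTop atTop := by
  have hlin : ∀ x ∈ Ici a, c * (x - a) ≤ f x - f a := fun x hx =>
    (convex_Ici a).mul_sub_le_image_sub_of_le_deriv
      (fun y hy => (hf y hy).continuousAt.continuousWithinAt)
      (fun y hy => (hf y (interior_subset hy)).differentiableWithinAt)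
      (fun y hy => hf' y (interior_subset hy)) a self_mem_Ici x hx hx
  refine tendsto_atTop_mono' atTop ?_
    (tendsto_atTop_add_const_right _ (f a - c * a) (tendsto_id.const_mul_atTop hc))
  filter_upwards [eventually_ge_atTop a] with x hx
  show c * x + (f a - c * a) ≤ f x
  linarith [hlin x hx]

theorem abs_sin_two_mul_le {y : ℝ} : |sin (2 * y)| ≤ 2 * |y| := by
  simpa [abs_mul] using abs_sin_le_abs (x := 2 * y)

noncomputable def eq14Energy (h : ℝ → ℝ) (x : ℝ) : ℝ := deriv h x ^ 2 / 2 + sin (h x) ^ 2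

namespace SolvesEq14

variable {h : ℝ → ℝ} {x : ℝ}

theorem hasDerivAt (hh : SolvesEq14 h) (hx : 0 < x) : HasDerivAt h (deriv h x) x :=
  ((hh.1.differentiableOn two_ne_zero).differentiableAt (Ioi_mem_nhds hx)).hasDerivAt

theorem contDiffOn_deriv (hh : SolvesEq14 h) : ContDiffOn ℝ 1 (deriv h) (Ioi 0) :=
  hh.1.deriv_of_isOpen isOpen_Ioi (by norm_num)

theorem hasDerivAt_deriv (hh : SolvesEq14 h) (hx : 0 < x) :
    HasDerivAt (deriv h) (cosh x / sinh x * deriv h x - sin (2 * h x)) x := by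
  have hdiff := (hh.contDiffOn_deriv.differentiableOn one_ne_zero).differentiableAt
    (Ioi_mem_nhds hx)
  exact hdiff.hasDerivAt.congr_deriv (by linarith [hh.2 x hx])

theorem hasDerivAt_deriv_div_sinh (hh : SolvesEq14 h) (hx : 0 < x) :
    HasDerivAt (fun y => deriv h y / sinh y) (-sin (2 * h x) / sinh x) x := by
  have hs : sinh x ≠ 0 := (sinh_pos_iff.2 hx).ne'
  refine ((hh.hasDerivAt_deriv hx).div (hasDerivAt_sinh x) hs).congr_deriv ?_
  field_simp
  ring

theorem continuousOn_deriv_div_sinh (hh : SolvesEq14 h) :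
    ContinuousOn (fun y => deriv h y / sinh y) (Ioi 0) := fun _ hx =>
  (hh.hasDerivAt_deriv_div_sinh hx).continuousAt.continuousWithinAt

theorem hasDerivAt_eq14Energy (hh : SolvesEq14 h) (hx : 0 < x) :
    HasDerivAt (eq14Energy h) (cosh x / sinh x * deriv h x ^ 2) x := by
  have hsin := ((hasDerivAt_sin (h x)).comp x (hh.hasDerivAt hx)).pow 2
  refine ((((hh.hasDerivAt_deriv hx).pow 2).div_const 2).add hsin).congr_deriv ?_
  rw [sin_two_mul, Function.comp_apply]
  push_cast
  ring

theorem monotoneOn_eq14Energy (hh : SolvesEq14 h) : MonotoneOn (eq14Energy h) (Ioi 0) := by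
  refine monotoneOn_of_deriv_nonneg (convex_Ioi 0)
    (fun y hy => (hh.hasDerivAt_eq14Energy hy).continuousAt.continuousWithinAt)
    (fun y hy => (hh.hasDerivAt_eq14Energy (interior_subset hy)).differentiableAt
      |>.differentiableWithinAt) fun y hy => ?_
  rw [interior_Ioi] at hy
  rw [(hh.hasDerivAt_eq14Energy hy).deriv]
  have := sinh_pos_iff.2 hy
  positivity

theorem one_lt_deriv_of_le (hh : SolvesEq14 h) {x₀ : ℝ} (hx₀ : 0 < x₀) (hpos : 0 < deriv h x₀)
    (hE : 3 / 2 < eq14Energy h x₀) (hx : x₀ ≤ x) : 1 < deriv h x := by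
  have hsq : ∀ y, x₀ ≤ y → 1 < deriv h y ^ 2 := fun y hy => by
    have := hh.monotoneOn_eq14Energy (mem_Ioi.2 hx₀) (mem_Ioi.2 (hx₀.trans_le hy)) hy
    unfold eq14Energy at this hE
    linarith [sin_sq_le_one (h y)]
  have hderiv_pos : 0 < deriv h x := not_le.1 fun hneg => by
    obtain ⟨c, hc, hc0⟩ := intermediate_value_Icc' hx
      (hh.contDiffOn_deriv.continuousOn.mono fun t ht => hx₀.trans_le ht.1) ⟨hneg, hpos.le⟩
    have := hsq c hc.1
    rw [hc0] at this
    norm_num at this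
  nlinarith [hsq x hx]

theorem abs_deriv_div_sinh_sub_le (hh : SolvesEq14 h) {c M : ℝ}
    (h0 : Tendsto h (𝓝[>] 0) (𝓝 0))
    (hc : Tendsto (fun y => deriv h y / sinh y) (𝓝[>] 0) (𝓝 c)) (hx : 0 < x)
    (hM : ∀ t ∈ Ioo 0 x, |deriv h t / sinh t| ≤ M) :
    |deriv h x / sinh x - c| ≤ 2 * M * x ^ 2 := by
  have hM0 : 0 ≤ M := (abs_nonneg _).trans (hM (x / 2) ⟨by linarith, by linarith⟩)
  have habs_deriv : ∀ s ∈ Ioo 0 x, |deriv h s| ≤ M * sinh s := fun s hs => by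
    have hsinh := sinh_pos_iff.2 hs.1
    have := hM s hs
    rwa [abs_div, abs_of_pos hsinh, div_le_iff₀ hsinh] at this
  have habs : ∀ t ∈ Ioo 0 x, |h t| ≤ M * sinh t * t := fun t ht => by
    have := abs_sub_le_mul_of_tendsto_nhdsGT ht.1 (fun s hs => hh.hasDerivAt hs.1)
      (fun s hs => (habs_deriv s ⟨hs.1, hs.2.trans ht.2⟩).trans
        (mul_le_mul_of_nonneg_left (sinh_le_sinh.2 hs.2.le) hM0)) h0
    simpa using this
  have habs_slope : ∀ t ∈ Ioo 0 x, |-sin (2 * h t) / sinh t| ≤ 2 * M * x := fun t ht => by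
    have hsinh := sinh_pos_iff.2 ht.1
    rw [abs_div, abs_neg, abs_of_pos hsinh, div_le_iff₀ hsinh]
    calc |sin (2 * h t)| ≤ 2 * |h t| := abs_sin_two_mul_le
      _ ≤ 2 * (M * sinh t * t) := by linarith [habs t ht]
      _ ≤ 2 * M * x * sinh t := by
        nlinarith [mul_le_mul_of_nonneg_left ht.2.le (mul_nonneg hM0 hsinh.le)]
  have := abs_sub_le_mul_of_tendsto_nhdsGT hx
    (fun t ht => hh.hasDerivAt_deriv_div_sinh ht.1) habs_slope hc
  rw [sub_zero] at this
  linarith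

end SolvesEq14

namespace IsBOrbit

variable {b : ℝ} {h : ℝ → ℝ}

theorem tendsto_nhdsGT_zero (hh : IsBOrbit b h) : Tendsto h (𝓝[>] 0) (𝓝 0) := by
  have hsq : Tendsto (fun x : ℝ => x ^ 2) (𝓝[>] 0) (𝓝 0) :=
    tendsto_nhdsWithin_of_tendsto_nhds (by simpa using (continuous_pow 2).tendsto (0 : ℝ))
  refine (mul_zero b ▸ hh.2.mul hsq).congr' ?_
  filter_upwards [self_mem_nhdsWithin] with x hx
  exact div_mul_cancel₀ _ (pow_ne_zero 2 (ne_of_gt hx))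

theorem exists_tendsto_deriv_div_sinh (hh : IsBOrbit b h) :
    ∃ G, Tendsto (fun y => deriv h y / sinh y) (𝓝[>] 0) (𝓝 G) := by
  have hquad : ∀ᶠ x in 𝓝[>] 0, |h x| ≤ (|b| + 1) * x ^ 2 := by
    filter_upwards [Metric.tendsto_nhds.1 hh.2 1 one_pos, self_mem_nhdsWithin] with x hx hx0
    have hx2 : 0 < x ^ 2 := pow_pos hx0 2
    have hratio : |h x / x ^ 2| ≤ |b| + 1 := by
      linarith [abs_sub_abs_le_abs_sub (h x / x ^ 2) b, Real.dist_eq (h x / x ^ 2) b]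
    rwa [abs_div, abs_of_pos hx2, div_le_iff₀ hx2] at hratio
  obtain ⟨δ, hδ, hδquad⟩ := mem_nhdsGT_iff_exists_Ioc_subset.1 hquad
  rw [mem_Ioi] at hδ
  have hK : 0 ≤ 2 * (|b| + 1) * δ := by positivity
  refine LipschitzOnWith.exists_tendsto_nhdsGT hδ
    ((convex_Ioo 0 δ).lipschitzOnWith_of_nnnorm_hasDerivWithin_le
      (C := (2 * (|b| + 1) * δ).toNNReal)
      (fun t ht => (hh.1.hasDerivAt_deriv_div_sinh ht.1).hasDerivWithinAt) fun t ht => ?_)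
  have hsinh := sinh_pos_iff.2 ht.1
  have hht : |h t| ≤ (|b| + 1) * t ^ 2 := hδquad (Ioo_subset_Ioc_self ht)
  rw [← NNReal.coe_le_coe, coe_nnnorm, Real.coe_toNNReal _ hK, Real.norm_eq_abs, abs_div, abs_neg,
    abs_of_pos hsinh, div_le_iff₀ hsinh]
  calc |sin (2 * h t)| ≤ 2 * |h t| := abs_sin_two_mul_le
    _ ≤ 2 * ((|b| + 1) * t ^ 2) := by linarith
    _ ≤ 2 * (|b| + 1) * δ * sinh t := by
      have htδ : t * t ≤ δ * sinh t :=
        mul_le_mul ht.2.le (self_le_sinh_iff.2 ht.1.le) ht.1.le hδ.le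
      nlinarith [abs_nonneg b]

theorem tendsto_deriv_div_sinh (hh : IsBOrbit b h) :
    Tendsto (fun y => deriv h y / sinh y) (𝓝[>] 0) (𝓝 (2 * b)) := by
  obtain ⟨G, hG⟩ := hh.exists_tendsto_deriv_div_sinh
  have hsinh : Tendsto (fun x => sinh x / x) (𝓝[>] 0) (𝓝 1) := by
    simpa [div_eq_inv_mul] using (hasDerivAt_sinh 0).tendsto_slope_zero_right
  have hlhopital : Tendsto (fun x => h x / x ^ 2) (𝓝[>] 0) (𝓝 (G / 2)) := by
    refine HasDerivAt.lhopital_zero_nhdsGT (f' := deriv h) (g' := fun x => 2 * x) ?_ ?_ ?_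
      hh.tendsto_nhdsGT_zero ?_ ?_
    · filter_upwards [self_mem_nhdsWithin] with x hx using hh.1.hasDerivAt hx
    · filter_upwards with x using by simpa using hasDerivAt_pow 2 x
    · filter_upwards [self_mem_nhdsWithin] with x hx using by simp [(mem_Ioi.1 hx).ne']
    · exact tendsto_nhdsWithin_of_tendsto_nhds (by simpa using (continuous_pow 2).tendsto (0 : ℝ))
    · refine (mul_one G ▸ (hG.mul hsinh).div_const 2).congr' ?_
      filter_upwards [self_mem_nhdsWithin] with x hx
      have : sinh x ≠ 0 := (sinh_pos_iff.2 hx).ne'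
      field_simp [(mem_Ioi.1 hx).ne']
  rw [tendsto_nhds_unique hh.2 hlhopital, mul_div_cancel₀ _ two_ne_zero]
  exact hG

theorem abs_deriv_div_sinh_sub_lt (hh : IsBOrbit b h) (hb : 0 < b) :
    ∀ x ∈ Ioc 0 (2 / 5), |deriv h x / sinh x - 2 * b| < b := by
  have hg := hh.tendsto_deriv_div_sinh
  suffices ∀ x ∈ Ioc (0 : ℝ) (2 / 5), deriv h x / sinh x ∈ Metric.ball (2 * b) b by
    simpa only [Metric.mem_ball, Real.dist_eq] using this
  refine forall_mem_Ioc_of_bootstrap Metric.isOpen_ball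
    (hh.1.continuousOn_deriv_div_sinh.mono Ioc_subset_Ioi_self)
    (hg (Metric.ball_mem_nhds (2 * b) hb)) fun x hx hball => ?_
  have hbound : ∀ t ∈ Ioo 0 x, |deriv h t / sinh t| ≤ 3 * b := fun t ht => by
    have := hball t ht
    rw [Metric.mem_ball, Real.dist_eq, abs_lt] at this
    rw [abs_le]
    constructor <;> linarith
  have := hh.1.abs_deriv_div_sinh_sub_le hh.tendsto_nhdsGT_zero hg hx.1 hbound
  have hx2 : x ^ 2 ≤ 4 / 25 := by nlinarith [hx.1, hx.2]
  rw [Metric.mem_ball, Real.dist_eq]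
  nlinarith

end IsBOrbit

/-- **Lemma 4.** If `b` is sufficiently large then the `b`-orbit increases
monotonically to `∞`. -/
theorem large_b_orbits_increase_to_infinity :
    ∃ B > (0:ℝ), ∀ b : ℝ, B < b → ∀ h : ℝ → ℝ, IsBOrbit b h →
      StrictMonoOn h (Ioi 0) ∧ Filter.Tendsto h Filter.atTop Filter.atTop := by
  refine ⟨5, by norm_num, fun b hb h hh => ?_⟩
  have hslope_lower : ∀ x ∈ Ioc 0 (2 / 5), b * sinh x < deriv h x := fun x hx => by
    have hsinh := sinh_pos_iff.2 hx.1
    have := (abs_lt.1 (hh.abs_deriv_div_sinh_sub_lt (by linarith) x hx)).1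
    rw [← lt_div_iff₀ hsinh]
    linarith
  have hx₀ : (2 / 5 : ℝ) ∈ Ioc 0 (2 / 5) := ⟨by norm_num, le_rfl⟩
  have hderiv₀ : 2 < deriv h (2 / 5) := by
    have := hslope_lower _ hx₀
    nlinarith [self_lt_sinh_iff.2 (show (0 : ℝ) < 2 / 5 by norm_num)]
  have henergy₀ : 3 / 2 < eq14Energy h (2 / 5) := by
    unfold eq14Energy
    nlinarith [sq_nonneg (sin (h (2 / 5)))]
  have hlarge : ∀ x ∈ Ici (2 / 5 : ℝ), 1 < deriv h x := fun x hx =>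
    hh.1.one_lt_deriv_of_le (by norm_num) (by linarith) henergy₀ hx
  have hpos : ∀ x ∈ Ioi (0 : ℝ), 0 < deriv h x := fun x hx => by
    rcases le_or_gt x (2 / 5) with hx' | hx'
    · exact (mul_pos (by linarith) (sinh_pos_iff.2 hx)).trans (hslope_lower x ⟨hx, hx'⟩)
    · exact one_pos.trans (hlarge x hx'.le)
  refine ⟨strictMonoOn_of_deriv_pos (convex_Ioi 0)
      (fun x hx => (hh.1.hasDerivAt hx).continuousAt.continuousWithinAt)
      (by rwa [interior_Ioi]),
    tendsto_atTop_of_le_deriv one_pos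
      (fun x hx => (hh.1.hasDerivAt (lt_of_lt_of_le (by norm_num) hx)).differentiableAt)
      fun x hx => (hlarge x hx).le⟩
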